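/- Fix H ∈ (1/2, 1) and 0 ≤ s < r < u < t. Then ∫₀^r K_H(r,v)(K_H(t,v) - K_H(u,v)) dv - ∫₀^s K_H(s,v)(K_H(t,v) - K_H(u,v)) dv = (1/2)[ (t-s)^{2H} - (u-s)^{2H} - (t-r)^{2H} + (u-r)^{2H} ]. -/

import Mathlib

/-!
For `a ≤ b`, write `K_H(t,v) = c_H v^{1/2-H} ∫_v^t (w-v)^{H-3/2} w^{H-1/2} dw` and apply
Tonelli: `∫₀^a K_H(a,v) K_H(b,v) dv = ∫₀^a ∫₀^b φ(w,z) dz dw` with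
`φ(w,z) = c_H² (wz)^{H-1/2} ∫₀^{w∧z} v^{1-2H} (w-v)^{H-3/2} (z-v)^{H-3/2} dv`.
The substitution `x = v(z-w)/(w(z-v))` turns the inner integral into the beta integral
`B(2-2H, H-1/2)`, and the choice of `c_H` gives `φ(w,z) = H(2H-1)|z-w|^{2H-2}`. Integrating,
`∫₀^a K_H(a,v) K_H(b,v) dv = (a^{2H} + b^{2H} - (b-a)^{2H})/2`, and the identity is the
difference of four such covariances.
-/

open MeasureTheory Set

/-- Normalizing constant of the Volterra kernel for `H > 1/2`. -/
noncomputable def cH (H : ℝ) : ℝ :=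
  Real.sqrt (H * (2 * H - 1) / ∫ x in Ioo (0:ℝ) 1, (1 - x) ^ (1 - 2 * H) * x ^ (H - 3/2))

/-- Volterra kernel for `H > 1/2`, extended by `0` for `s ≥ t`. -/
noncomputable def KH (H t s : ℝ) : ℝ :=
  if s < t then
    cH H * s ^ ((1:ℝ)/2 - H) * ∫ w in Ioo s t, (w - s) ^ (H - 3/2) * w ^ (H - 1/2)
  else 0

open scoped ENNReal

section IteratedIntegrals

variable {α β : Type*} [MeasurableSpace α] [MeasurableSpace β] {μ : Measure α} {ν : Measure β}

theorem measurable_setIntegral_section [SFinite ν] {f : α × β → ℝ} (hf : Measurable f)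
    {s : Set (α × β)} (hs : MeasurableSet s) :
    Measurable fun x => ∫ y in Prod.mk x ⁻¹' s, f (x, y) ∂ν := by
  convert ((hf.indicator hs).stronglyMeasurable.integral_prod_right' (ν := ν)).measurable
    using 2 with x
  rw [← integral_indicator (measurable_prodMk_left hs)]
  rfl

theorem setLIntegral_setLIntegral_eq_lintegral_lintegral_indicator
    {A : Set α} {T : α → Set β} (hA : MeasurableSet A) (hT : ∀ x, MeasurableSet (T x))
    (F : α → β → ℝ≥0∞) :
    ∫⁻ x in A, ∫⁻ y in T x, F x y ∂ν ∂μ = ∫⁻ x, ∫⁻ y,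
      {p : α × β | p.1 ∈ A ∧ p.2 ∈ T p.1}.indicator (Function.uncurry F) (x, y) ∂ν ∂μ := by
  classical
  rw [← lintegral_indicator hA]
  congr 1 with x
  by_cases hx : x ∈ A
  · rw [indicator_of_mem hx, ← lintegral_indicator (hT x)]
    congr 1 with y
    simp only [Set.indicator_apply, mem_ofPred_eq, hx, true_and, Function.uncurry_apply_pair]
  · simp [hx]

theorem setLIntegral_setLIntegral_swap [SFinite μ] [SFinite ν] {F : α → β → ℝ≥0∞}
    (hF : Measurable (Function.uncurry F)) {A : Set α} {T : α → Set β} {B : Set β}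
    {U : β → Set α} (hA : MeasurableSet A) (hT : ∀ x, MeasurableSet (T x))
    (hB : MeasurableSet B) (hU : ∀ y, MeasurableSet (U y))
    (hS : MeasurableSet {p : α × β | p.1 ∈ A ∧ p.2 ∈ T p.1})
    (hAT : ∀ x y, x ∈ A ∧ y ∈ T x ↔ y ∈ B ∧ x ∈ U y) :
    ∫⁻ x in A, ∫⁻ y in T x, F x y ∂ν ∂μ = ∫⁻ y in B, ∫⁻ x in U y, F x y ∂μ ∂ν := by
  classical
  rw [setLIntegral_setLIntegral_eq_lintegral_lintegral_indicator hA hT,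
    setLIntegral_setLIntegral_eq_lintegral_lintegral_indicator hB hU,
    lintegral_lintegral_swap (f := fun x y =>
      {p : α × β | p.1 ∈ A ∧ p.2 ∈ T p.1}.indicator (Function.uncurry F) (x, y))
      (hF.indicator hS).aemeasurable]
  congr 1 with y; congr 1 with x
  simp only [Set.indicator_apply, mem_ofPred_eq, hAT, Function.uncurry_apply_pair]

theorem integrable_and_integral_eq_of_lintegral_ofReal_eq {f : α → ℝ} {c : ℝ}
    (hf : AEStronglyMeasurable f μ) (hf0 : 0 ≤ᵐ[μ] f) (hc : 0 ≤ c)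
    (h : ∫⁻ x, ENNReal.ofReal (f x) ∂μ = ENNReal.ofReal c) :
    Integrable f μ ∧ ∫ x, f x ∂μ = c :=
  ⟨⟨hf, (hasFiniteIntegral_iff_ofReal hf0).2 (h ▸ ENNReal.ofReal_lt_top)⟩,
    by rw [integral_eq_lintegral_of_nonneg_ae hf0 hf, h, ENNReal.toReal_ofReal hc]⟩

end IteratedIntegrals

section PowerIntegrals

variable {p w a b : ℝ}

theorem lintegral_Ioc_ofReal_eq_intervalIntegral {f : ℝ → ℝ} (hab : a ≤ b)
    (hf : IntervalIntegrable f volume a b) (hf0 : ∀ x ∈ Ioc a b, 0 ≤ f x) :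
    ∫⁻ x in Ioc a b, ENNReal.ofReal (f x) = ENNReal.ofReal (∫ x in a..b, f x) := by
  rw [intervalIntegral.integral_of_le hab, ofReal_integral_eq_lintegral_ofReal
    ((intervalIntegrable_iff_integrableOn_Ioc_of_le hab).1 hf)
    (ae_restrict_of_forall_mem measurableSet_Ioc hf0)]

theorem lintegral_abs_sub_rpow (hp : -1 < p) (hw : 0 ≤ w) (hwb : w ≤ b) :
    ∫⁻ z in Ioo 0 b, ENNReal.ofReal (|z - w| ^ p)
      = ENNReal.ofReal ((w ^ (p + 1) + (b - w) ^ (p + 1)) / (p + 1)) := by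
  have hp1 : 0 < p + 1 := by linarith
  have left : ∫⁻ z in Ioc 0 w, ENNReal.ofReal (|z - w| ^ p)
      = ENNReal.ofReal (w ^ (p + 1) / (p + 1)) := by
    rw [setLIntegral_congr_fun (g := fun z => ENNReal.ofReal ((w - z) ^ p)) measurableSet_Ioc
        (fun z hz => by rw [abs_of_nonpos (sub_nonpos.2 hz.2), neg_sub]),
      lintegral_Ioc_ofReal_eq_intervalIntegral hw
        (by simpa using
          (intervalIntegral.intervalIntegrable_rpow' hp (a := w) (b := 0)).comp_sub_left w)
        (fun z hz => Real.rpow_nonneg (sub_nonneg.2 hz.2) p),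
      intervalIntegral.integral_comp_sub_left (fun x => x ^ p), sub_self, sub_zero,
      integral_rpow (Or.inl hp), Real.zero_rpow hp1.ne', sub_zero]
  have right : ∫⁻ z in Ioc w b, ENNReal.ofReal (|z - w| ^ p)
      = ENNReal.ofReal ((b - w) ^ (p + 1) / (p + 1)) := by
    rw [setLIntegral_congr_fun (g := fun z => ENNReal.ofReal ((z - w) ^ p)) measurableSet_Ioc
        (fun z hz => by rw [abs_of_pos (sub_pos.2 hz.1)]),
      lintegral_Ioc_ofReal_eq_intervalIntegral hwb
        (by simpa using
          (intervalIntegral.intervalIntegrable_rpow' hp (a := 0) (b := b - w)).comp_sub_right w)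
        (fun z hz => Real.rpow_nonneg (sub_nonneg.2 hz.1.le) p),
      intervalIntegral.integral_comp_sub_right (fun x => x ^ p), sub_self,
      integral_rpow (Or.inl hp), Real.zero_rpow hp1.ne', sub_zero]
  rw [setLIntegral_congr Ioo_ae_eq_Ioc, ← Ioc_union_Ioc_eq_Ioc hw hwb,
    lintegral_union measurableSet_Ioc (Ioc_disjoint_Ioc_of_le le_rfl), left, right,
    ← ENNReal.ofReal_add (by positivity) (by have := sub_nonneg.2 hwb; positivity), add_div]

theorem lintegral_lintegral_abs_sub_rpow (hp : -1 < p) (ha : 0 ≤ a) (hab : a ≤ b) :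
    ∫⁻ w in Ioo 0 a, ∫⁻ z in Ioo 0 b, ENNReal.ofReal (|z - w| ^ p)
      = ENNReal.ofReal
          ((a ^ (p + 2) + b ^ (p + 2) - (b - a) ^ (p + 2)) / ((p + 1) * (p + 2))) := by
  have hp1 : 0 < p + 1 := by linarith
  have hpow : Continuous fun x : ℝ => x ^ (p + 1) := Real.continuous_rpow_const hp1.le
  have hsub : Continuous fun x : ℝ => (b - x) ^ (p + 1) := hpow.comp (continuous_sub_left b)
  have hcont : Continuous fun x : ℝ => (x ^ (p + 1) + (b - x) ^ (p + 1)) / (p + 1) := by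
    fun_prop
  rw [setLIntegral_congr_fun measurableSet_Ioo
      (fun w hw => lintegral_abs_sub_rpow hp hw.1.le (hw.2.le.trans hab)),
    setLIntegral_congr Ioo_ae_eq_Ioc,
    lintegral_Ioc_ofReal_eq_intervalIntegral ha (hcont.intervalIntegrable _ _)
      (fun w hw => div_nonneg (add_nonneg (Real.rpow_nonneg hw.1.le _)
        (Real.rpow_nonneg (sub_nonneg.2 (hw.2.trans hab)) _)) hp1.le),
    intervalIntegral.integral_div,
    intervalIntegral.integral_add (hpow.intervalIntegrable _ _) (hsub.intervalIntegrable _ _),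
    intervalIntegral.integral_comp_sub_left (fun x => x ^ (p + 1)),
    integral_rpow (Or.inl (by linarith)), integral_rpow (Or.inl (by linarith)),
    show p + 1 + 1 = p + 2 by ring, Real.zero_rpow (by linarith), sub_zero, sub_zero]
  congr 1
  field_simp
  ring

theorem integrableOn_Ioo_sub_rpow_mul_rpow {v t q : ℝ} (hp : -1 < p) (hv : 0 < v)
    (hvt : v ≤ t) :
    IntegrableOn (fun w => (w - v) ^ p * w ^ q) (Ioo v t) := by
  have hsing : IntegrableOn (fun w : ℝ => (w - v) ^ p) (Icc v t) := by
    rw [integrableOn_Icc_iff_integrableOn_Ioc,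
      ← intervalIntegrable_iff_integrableOn_Ioc_of_le hvt]
    simpa using
      (intervalIntegral.intervalIntegrable_rpow' hp (a := 0) (b := t - v)).comp_sub_right v
  exact (hsing.mul_continuousOn (continuousOn_id.rpow_const fun w hw =>
    Or.inl (hv.trans_le hw.1).ne') isCompact_Icc).mono_set Ioo_subset_Icc_self

end PowerIntegrals

section Beta

variable {α β : ℝ}

theorem ofReal_rpow_mul_one_sub_rpow {x : ℝ} (hx : x ∈ Icc (0:ℝ) 1) :
    ((x ^ (α - 1) * (1 - x) ^ (β - 1) : ℝ) : ℂ)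
      = (x : ℂ) ^ ((α : ℂ) - 1) * (1 - (x : ℂ)) ^ ((β : ℂ) - 1) := by
  push_cast [Complex.ofReal_cpow hx.1, Complex.ofReal_cpow (sub_nonneg.2 hx.2)]
  rfl

theorem integrableOn_Ioc_cpow_mul_one_sub_cpow (hα : 0 < α) (hβ : 0 < β) :
    IntegrableOn (fun x : ℝ => (x : ℂ) ^ ((α : ℂ) - 1) * (1 - (x : ℂ)) ^ ((β : ℂ) - 1))
      (Ioc 0 1) :=
  (intervalIntegrable_iff_integrableOn_Ioc_of_le zero_le_one).1
    (Complex.betaIntegral_convergent (by simpa) (by simpa))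

theorem integrableOn_Ioc_rpow_mul_one_sub_rpow (hα : 0 < α) (hβ : 0 < β) :
    IntegrableOn (fun x : ℝ => x ^ (α - 1) * (1 - x) ^ (β - 1)) (Ioc 0 1) := by
  refine IntegrableOn.congr_fun (integrableOn_Ioc_cpow_mul_one_sub_cpow hα hβ).re
    (fun x hx => ?_) measurableSet_Ioc
  rw [← ofReal_rpow_mul_one_sub_rpow (Ioc_subset_Icc_self hx), RCLike.re_to_complex,
    Complex.ofReal_re]

theorem integral_Ioo_rpow_mul_one_sub_rpow (hα : 0 < α) (hβ : 0 < β) :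
    ∫ x in Ioo (0:ℝ) 1, x ^ (α - 1) * (1 - x) ^ (β - 1) = ProbabilityTheory.beta α β := by
  rw [ProbabilityTheory.beta_eq_betaIntegralReal α β hα hβ, Complex.betaIntegral,
    intervalIntegral.integral_of_le zero_le_one, ← integral_Ioc_eq_integral_Ioo,
    ← RCLike.re_to_complex, ← integral_re]
  · refine setIntegral_congr_fun measurableSet_Ioc fun x hx => ?_
    rw [← ofReal_rpow_mul_one_sub_rpow (Ioc_subset_Icc_self hx), RCLike.re_to_complex,
      Complex.ofReal_re]
  · exact integrableOn_Ioc_cpow_mul_one_sub_cpow hα hβ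

end Beta

section Substitution

variable {w z : ℝ}

noncomputable def betaSubst (w z v : ℝ) : ℝ := v * (z - w) / (w * (z - v))

theorem hasDerivAt_betaSubst (hw : 0 < w) {v : ℝ} (hvz : v < z) :
    HasDerivAt (betaSubst w z) ((z - w) * z / (w * (z - v) ^ 2)) v := by
  have hzv : z - v ≠ 0 := (sub_pos.2 hvz).ne'
  refine (((hasDerivAt_id v).mul_const (z - w)).div
    (((hasDerivAt_id v).const_sub z).const_mul w) (mul_ne_zero hw.ne' hzv)).congr_deriv ?_
  simp only [id]
  field_simp
  ring

theorem betaSubst_image (hw : 0 < w) (hwz : w < z) : betaSubst w z '' Ioo 0 w = Ioo 0 1 := by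
  have hz : 0 < z := hw.trans hwz
  ext x
  constructor
  · rintro ⟨v, ⟨hv0, hvw⟩, rfl⟩
    have hzv : 0 < z - v := by linarith
    refine ⟨by unfold betaSubst; apply div_pos <;> nlinarith, ?_⟩
    rw [betaSubst, div_lt_one (by positivity)]
    nlinarith
  · rintro ⟨hx0, hx1⟩
    have hd : 0 < z - w + x * w := by nlinarith
    refine ⟨x * w * z / (z - w + x * w), ⟨by positivity, ?_⟩, ?_⟩
    · rw [div_lt_iff₀ hd]; nlinarith [mul_pos hw (sub_pos.2 hwz)]
    · have hzv : z - x * w * z / (z - w + x * w) = z * (z - w) / (z - w + x * w) := by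
        field_simp; ring
      have := (sub_pos.2 hwz).ne'
      rw [betaSubst, hzv]
      field_simp

theorem betaSubst_strictMonoOn (hw : 0 < w) (hwz : w < z) :
    StrictMonoOn (betaSubst w z) (Ioo 0 w) := by
  intro a ha b hb hab
  have hza : 0 < z - a := by linarith [ha.2]
  have hzb : 0 < z - b := by linarith [hb.2]
  rw [betaSubst, betaSubst, div_lt_div_iff₀ (by positivity) (by positivity)]
  have : 0 < (z - w) * w * z * (b - a) := by
    have := sub_pos.2 hwz; have := sub_pos.2 hab; have := hw.trans hwz; positivity
  nlinarith

theorem one_sub_betaSubst (hw : 0 < w) {v : ℝ} (hvz : v < z) :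
    1 - betaSubst w z v = z * (w - v) / (w * (z - v)) := by
  have := (sub_pos.2 hvz).ne'
  rw [betaSubst]
  field_simp
  ring

variable {α β : ℝ}

theorem abs_deriv_betaSubst_mul_rpow_mul_one_sub_rpow (hw : 0 < w) (hwz : w < z) {v : ℝ}
    (hv : v ∈ Ioo 0 w) :
    |(z - w) * z / (w * (z - v) ^ 2)|
        * (betaSubst w z v ^ (α - 1) * (1 - betaSubst w z v) ^ (β - 1))
      = z ^ β * w ^ (1 - α - β) * (z - w) ^ α
        * (v ^ (α - 1) * (w - v) ^ (β - 1) * (z - v) ^ (-α - β)) := by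
  obtain ⟨hv0, hvw⟩ := hv
  have hz : 0 < z := hw.trans hwz
  have hzw : 0 < z - w := sub_pos.2 hwz
  have hwv : 0 < w - v := sub_pos.2 hvw
  have hzv : 0 < z - v := by linarith
  rw [one_sub_betaSubst hw (by linarith), betaSubst, abs_of_pos (by positivity)]
  refine Real.log_injOn_pos (mem_Ioi.2 (by positivity)) (mem_Ioi.2 (by positivity)) ?_
  simp (disch := positivity) only [Real.log_mul, Real.log_div, Real.log_rpow, Real.log_pow]
  push_cast
  ring

theorem integrableOn_rpow_mul_sub_rpow_mul_sub_rpow (hα : 0 < α) (hβ : 0 < β) (hw : 0 < w)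
    (hwz : w < z) :
    IntegrableOn (fun v => v ^ (α - 1) * (w - v) ^ (β - 1) * (z - v) ^ (-α - β)) (Ioo 0 w) := by
  have hderiv : ∀ v ∈ Ioo 0 w, HasDerivWithinAt (betaSubst w z)
      ((z - w) * z / (w * (z - v) ^ 2)) (Ioo 0 w) v :=
    fun v hv => (hasDerivAt_betaSubst hw (hv.2.trans hwz)).hasDerivWithinAt
  have h := (integrableOn_image_iff_integrableOn_abs_deriv_smul measurableSet_Ioo hderiv
    (betaSubst_strictMonoOn hw hwz).injOn (fun x => x ^ (α - 1) * (1 - x) ^ (β - 1))).1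
    (by rw [betaSubst_image hw hwz]
        exact (integrableOn_Ioc_rpow_mul_one_sub_rpow hα hβ).mono_set Ioo_subset_Ioc_self)
  have hC : 0 < z ^ β * w ^ (1 - α - β) * (z - w) ^ α := by
    have := sub_pos.2 hwz; have := hw.trans hwz; positivity
  refine IntegrableOn.congr_fun (h.const_mul (z ^ β * w ^ (1 - α - β) * (z - w) ^ α)⁻¹)
    (fun v hv => ?_) measurableSet_Ioo
  simp only [smul_eq_mul, abs_deriv_betaSubst_mul_rpow_mul_one_sub_rpow hw hwz hv,
    inv_mul_cancel_left₀ hC.ne']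

theorem integral_rpow_mul_sub_rpow_mul_sub_rpow (hα : 0 < α) (hβ : 0 < β) (hw : 0 < w)
    (hwz : w < z) :
    ∫ v in Ioo 0 w, v ^ (α - 1) * (w - v) ^ (β - 1) * (z - v) ^ (-α - β)
      = w ^ (α + β - 1) * z ^ (-β) * (z - w) ^ (-α) * ProbabilityTheory.beta α β := by
  have hz := hw.trans hwz
  have hzw := sub_pos.2 hwz
  have hderiv : ∀ v ∈ Ioo 0 w, HasDerivWithinAt (betaSubst w z)
      ((z - w) * z / (w * (z - v) ^ 2)) (Ioo 0 w) v :=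
    fun v hv => (hasDerivAt_betaSubst hw (hv.2.trans hwz)).hasDerivWithinAt
  have key := integral_image_eq_integral_abs_deriv_smul measurableSet_Ioo hderiv
    (betaSubst_strictMonoOn hw hwz).injOn (fun x => x ^ (α - 1) * (1 - x) ^ (β - 1))
  simp only [smul_eq_mul] at key
  rw [betaSubst_image hw hwz, integral_Ioo_rpow_mul_one_sub_rpow hα hβ,
    setIntegral_congr_fun measurableSet_Ioo
      (fun v hv => abs_deriv_betaSubst_mul_rpow_mul_one_sub_rpow hw hwz hv),
    integral_const_mul] at key
  have hC : w ^ (α + β - 1) * z ^ (-β) * (z - w) ^ (-α)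
      * (z ^ β * w ^ (1 - α - β) * (z - w) ^ α) = 1 := by
    rw [show α + β - 1 = -(1 - α - β) by ring, Real.rpow_neg hw.le, Real.rpow_neg hz.le,
      Real.rpow_neg hzw.le]
    field_simp
  rw [key, ← mul_assoc, hC, one_mul]

end Substitution

section Kernel

variable {H t v w z a b : ℝ}

theorem cH_sq_mul_beta (hH : 1/2 < H) (hH1 : H < 1) :
    cH H ^ 2 * ProbabilityTheory.beta (2 - 2 * H) (H - 1/2) = H * (2 * H - 1) := by
  have hB := ProbabilityTheory.beta_pos (by linarith : 0 < 2 - 2 * H) (by linarith : 0 < H - 1/2)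
  have hI : ∫ x in Ioo (0:ℝ) 1, (1 - x) ^ (1 - 2 * H) * x ^ (H - 3/2)
      = ProbabilityTheory.beta (2 - 2 * H) (H - 1/2) := by
    have h := integral_Ioo_rpow_mul_one_sub_rpow (by linarith : 0 < H - 1/2)
      (by linarith : 0 < 2 - 2 * H)
    rw [show H - 1/2 - 1 = H - 3/2 by ring, show 2 - 2 * H - 1 = 1 - 2 * H by ring] at h
    refine (integral_congr_ae (ae_of_all _ fun x => mul_comm _ _)).trans ?_
    rw [h, ProbabilityTheory.beta, ProbabilityTheory.beta, mul_comm, add_comm]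
  rw [cH, hI, Real.sq_sqrt (div_nonneg (by nlinarith) hB.le), div_mul_cancel₀ _ hB.ne']

theorem KH_nonneg (hv : 0 ≤ v) : 0 ≤ KH H t v := by
  unfold KH
  split_ifs
  · refine mul_nonneg (mul_nonneg (Real.sqrt_nonneg _) (Real.rpow_nonneg hv _))
      (setIntegral_nonneg measurableSet_Ioo fun w hw => ?_)
    exact mul_nonneg (Real.rpow_nonneg (sub_nonneg.2 hw.1.le) _)
      (Real.rpow_nonneg (hv.trans hw.1.le) _)
  · exact le_rfl

theorem measurable_KH (H t : ℝ) : Measurable (KH H t) :=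
  Measurable.ite measurableSet_Iio
    ((measurable_const.mul (measurable_id.pow_const _)).mul
      (measurable_setIntegral_section
        (f := fun p : ℝ × ℝ => (p.2 - p.1) ^ (H - 3/2) * p.2 ^ (H - 1/2)) (by fun_prop)
        (s := {p | p.1 < p.2 ∧ p.2 < t})
        ((measurableSet_lt measurable_fst measurable_snd).inter
          (measurableSet_lt measurable_snd measurable_const))))
    measurable_const

noncomputable def KHDensity (H v w : ℝ) : ℝ≥0∞ :=
  ENNReal.ofReal (cH H * v ^ ((1:ℝ)/2 - H) * ((w - v) ^ (H - 3/2) * w ^ (H - 1/2)))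

theorem measurable_KHDensity (H : ℝ) : Measurable (Function.uncurry (KHDensity H)) := by
  unfold KHDensity
  fun_prop

theorem ofReal_KH (hH : 1/2 < H) (hv : 0 < v) (hvt : v < t) :
    ENNReal.ofReal (KH H t v) = ∫⁻ w in Ioo v t, KHDensity H v w := by
  rw [KH, if_pos hvt, ← integral_const_mul]
  refine ofReal_integral_eq_lintegral_ofReal
    ((integrableOn_Ioo_sub_rpow_mul_rpow (by linarith) hv hvt.le).const_mul _)
    (ae_restrict_of_forall_mem measurableSet_Ioo fun w hw => ?_)
  exact mul_nonneg (mul_nonneg (Real.sqrt_nonneg _) (Real.rpow_nonneg hv.le _))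
    (mul_nonneg (Real.rpow_nonneg (sub_nonneg.2 hw.1.le) _)
      (Real.rpow_nonneg (hv.trans hw.1).le _))

theorem KHDensity_mul_KHDensity (hv : 0 < v) (hvw : v < w) (hvz : v < z) :
    KHDensity H v w * KHDensity H v z = ENNReal.ofReal (cH H ^ 2 * (w * z) ^ (H - 1/2)
      * (v ^ (1 - 2 * H) * (w - v) ^ (H - 3/2) * (z - v) ^ (H - 3/2))) := by
  have hc : 0 ≤ cH H := Real.sqrt_nonneg _
  have hwv : 0 < w - v := sub_pos.2 hvw
  have hzv : 0 < z - v := sub_pos.2 hvz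
  have hw : 0 < w := hv.trans hvw
  have hz : 0 < z := hv.trans hvz
  rw [KHDensity, KHDensity, ← ENNReal.ofReal_mul (by positivity)]
  congr 1
  rw [Real.mul_rpow hw.le hz.le, show 1 - 2 * H = (1/2 - H) + (1/2 - H) by ring,
    Real.rpow_add hv]
  ring

-- On the diagonal `w = z` the left side is `∞` while Lean's `0 ^ (2 * H - 2)` is `0`.
theorem lintegral_KHDensity_mul_KHDensity (hH : 1/2 < H) (hH1 : H < 1) (hw : 0 < w) (hz : 0 < z)
    (hwz : w ≠ z) :
    ∫⁻ v in Ioo 0 (min w z), KHDensity H v w * KHDensity H v z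
      = ENNReal.ofReal (H * (2 * H - 1) * |z - w| ^ (2 * H - 2)) := by
  wlog h : w < z generalizing w z
  · rw [min_comm, abs_sub_comm]
    simp_rw [mul_comm (KHDensity H _ w)]
    exact this hz hw hwz.symm (lt_of_le_of_ne (not_lt.1 h) hwz.symm)
  have hα : 0 < 2 - 2 * H := by linarith
  have hβ : 0 < H - 1/2 := by linarith
  have hInt := integrableOn_rpow_mul_sub_rpow_mul_sub_rpow hα hβ hw h
  have hI := integral_rpow_mul_sub_rpow_mul_sub_rpow hα hβ hw h
  rw [show 2 - 2 * H - 1 = 1 - 2 * H by ring, show H - 1/2 - 1 = H - 3/2 by ring,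
    show -(2 - 2 * H) - (H - 1/2) = H - 3/2 by ring] at hInt hI
  rw [show 2 - 2 * H + (H - 1/2) - 1 = 1/2 - H by ring, show -(H - 1/2) = 1/2 - H by ring,
    show -(2 - 2 * H) = 2 * H - 2 by ring] at hI
  rw [min_eq_left h.le, setLIntegral_congr_fun measurableSet_Ioo
      fun v hv => KHDensity_mul_KHDensity hv.1 hv.2 (hv.2.trans h),
    ← ofReal_integral_eq_lintegral_ofReal (hInt.const_mul _) ?_, integral_const_mul, hI,
    abs_of_pos (sub_pos.2 h), ← cH_sq_mul_beta hH hH1]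
  · have hw1 : w ^ (H - 1/2) * w ^ (1/2 - H) = 1 := by rw [← Real.rpow_add hw]; norm_num
    have hz1 : z ^ (H - 1/2) * z ^ (1/2 - H) = 1 := by rw [← Real.rpow_add hz]; norm_num
    rw [Real.mul_rpow hw.le hz.le]
    congr 1
    linear_combination (cH H ^ 2 * ProbabilityTheory.beta (2 - 2 * H) (H - 1/2)
      * (z - w) ^ (2 * H - 2)) * (z ^ (H - 1/2) * z ^ (1/2 - H) * hw1 + hz1)
  · refine ae_restrict_of_forall_mem measurableSet_Ioo fun v ⟨hv0, hvw⟩ => ?_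
    have hc : 0 ≤ cH H := Real.sqrt_nonneg _
    have hzv : 0 < z - v := by linarith
    have hwv : 0 < w - v := by linarith
    positivity

theorem lintegral_ofReal_KH_mul_KH_eq_iterated (hH : 1/2 < H) (hab : a ≤ b) :
    ∫⁻ v in Ioo 0 a, ENNReal.ofReal (KH H a v * KH H b v)
      = ∫⁻ w in Ioo 0 a, ∫⁻ v in Ioo 0 w, ∫⁻ z in Ioo v b, KHDensity H v w * KHDensity H v z :=
  calc ∫⁻ v in Ioo 0 a, ENNReal.ofReal (KH H a v * KH H b v)
      = ∫⁻ v in Ioo 0 a, ∫⁻ w in Ioo v a, KHDensity H v w * ENNReal.ofReal (KH H b v) :=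
        setLIntegral_congr_fun measurableSet_Ioo fun v hv => by
          rw [ENNReal.ofReal_mul (KH_nonneg hv.1.le), ofReal_KH hH hv.1 hv.2,
            lintegral_mul_const' _ _ ENNReal.ofReal_ne_top]
    _ = ∫⁻ w in Ioo 0 a, ∫⁻ v in Ioo 0 w, KHDensity H v w * ENNReal.ofReal (KH H b v) :=
        setLIntegral_setLIntegral_swap
          ((measurable_KHDensity H).mul ((measurable_KH H b).ennreal_ofReal.comp measurable_fst))
          measurableSet_Ioo (fun _ => measurableSet_Ioo) measurableSet_Ioo
          (fun _ => measurableSet_Ioo) (by measurability)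
          (fun v w => by simp only [mem_Ioo]; grind)
    _ = ∫⁻ w in Ioo 0 a, ∫⁻ v in Ioo 0 w, ∫⁻ z in Ioo v b, KHDensity H v w * KHDensity H v z :=
        setLIntegral_congr_fun measurableSet_Ioo fun w hw =>
          setLIntegral_congr_fun measurableSet_Ioo fun v hv => by
            rw [ofReal_KH hH hv.1 (by linarith [hv.2, hw.2]),
              ← lintegral_const_mul' (KHDensity H v w) _ ENNReal.ofReal_ne_top]

theorem lintegral_lintegral_KHDensity_mul_KHDensity (hH : 1/2 < H) (hH1 : H < 1) (hw : 0 < w) :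
    ∫⁻ v in Ioo 0 w, ∫⁻ z in Ioo v b, KHDensity H v w * KHDensity H v z
      = ENNReal.ofReal (H * (2 * H - 1))
          * ∫⁻ z in Ioo 0 b, ENNReal.ofReal (|z - w| ^ (2 * H - 2)) :=
  calc ∫⁻ v in Ioo 0 w, ∫⁻ z in Ioo v b, KHDensity H v w * KHDensity H v z
      = ∫⁻ z in Ioo 0 b, ∫⁻ v in Ioo 0 (min w z), KHDensity H v w * KHDensity H v z :=
        setLIntegral_setLIntegral_swap
          ((measurable_KHDensity H).comp (measurable_fst.prodMk measurable_const) |>.mul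
            (measurable_KHDensity H))
          measurableSet_Ioo (fun _ => measurableSet_Ioo) measurableSet_Ioo
          (fun _ => measurableSet_Ioo) (by measurability)
          (fun v z => by simp only [mem_Ioo, lt_min_iff]; grind)
    _ = ∫⁻ z in Ioo 0 b,
          ENNReal.ofReal (H * (2 * H - 1)) * ENNReal.ofReal (|z - w| ^ (2 * H - 2)) :=
        setLIntegral_congr_fun_ae measurableSet_Ioo <| (Measure.ae_ne volume w).mono
          fun z hzw hz => by
            rw [lintegral_KHDensity_mul_KHDensity hH hH1 hw hz.1 hzw.symm,
              ENNReal.ofReal_mul (by nlinarith)]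
    _ = _ := lintegral_const_mul' _ _ ENNReal.ofReal_ne_top

theorem lintegral_ofReal_KH_mul_KH (hH : 1/2 < H) (hH1 : H < 1) (ha : 0 ≤ a) (hab : a ≤ b) :
    ∫⁻ v in Ioo 0 a, ENNReal.ofReal (KH H a v * KH H b v)
      = ENNReal.ofReal ((a ^ (2 * H) + b ^ (2 * H) - (b - a) ^ (2 * H)) / 2) := by
  rw [lintegral_ofReal_KH_mul_KH_eq_iterated hH hab,
    setLIntegral_congr_fun measurableSet_Ioo
      fun w hw => lintegral_lintegral_KHDensity_mul_KHDensity hH hH1 hw.1,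
    lintegral_const_mul' _ _ ENNReal.ofReal_ne_top,
    lintegral_lintegral_abs_sub_rpow (by linarith) ha hab, show 2 * H - 2 + 2 = 2 * H by ring,
    show 2 * H - 2 + 1 = 2 * H - 1 by ring, ← ENNReal.ofReal_mul (by nlinarith), mul_div_assoc']
  congr 1
  rw [div_eq_div_iff (mul_pos (by linarith) (by linarith)).ne' two_ne_zero]
  ring

theorem integrableOn_KH_mul_KH_and_integral (hH : 1/2 < H) (hH1 : H < 1) (ha : 0 ≤ a)
    (hab : a ≤ b) :
    IntegrableOn (fun v => KH H a v * KH H b v) (Ioo 0 a)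
      ∧ ∫ v in Ioo 0 a, KH H a v * KH H b v
        = (a ^ (2 * H) + b ^ (2 * H) - (b - a) ^ (2 * H)) / 2 := by
  have hmono : (b - a) ^ (2 * H) ≤ b ^ (2 * H) :=
    Real.rpow_le_rpow (sub_nonneg.2 hab) (by linarith) (by linarith)
  exact integrable_and_integral_eq_of_lintegral_ofReal_eq
    ((measurable_KH H a).mul (measurable_KH H b)).aestronglyMeasurable
    (ae_restrict_of_forall_mem measurableSet_Ioo fun v hv =>
      mul_nonneg (KH_nonneg hv.1.le) (KH_nonneg hv.1.le))
    (by have := Real.rpow_nonneg ha (2 * H); linarith)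
    (lintegral_ofReal_KH_mul_KH hH hH1 ha hab)

end Kernel

/-- a kernel identity for increments of the Volterra representation. -/
theorem KH_increment_identity (H s r u t : ℝ) (hH : H ∈ Ioo (1/2 : ℝ) 1)
    (hs : 0 ≤ s) (hsr : s < r) (hru : r < u) (hut : u < t) :
    (∫ v in Ioo (0:ℝ) r, KH H r v * (KH H t v - KH H u v))
      - ∫ v in Ioo (0:ℝ) s, KH H s v * (KH H t v - KH H u v)
      = (1/2) * ((t - s) ^ (2 * H) - (u - s) ^ (2 * H)
          - (t - r) ^ (2 * H) + (u - r) ^ (2 * H)) := by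
  obtain ⟨hH, hH1⟩ := hH
  have increment : ∀ a, 0 ≤ a → a ≤ u → ∫ v in Ioo 0 a, KH H a v * (KH H t v - KH H u v)
      = (a ^ (2 * H) + t ^ (2 * H) - (t - a) ^ (2 * H)) / 2
        - (a ^ (2 * H) + u ^ (2 * H) - (u - a) ^ (2 * H)) / 2 := by
    intro a ha hau
    obtain ⟨hIt, ht⟩ := integrableOn_KH_mul_KH_and_integral hH hH1 ha (hau.trans hut.le)
    obtain ⟨hIu, hu⟩ := integrableOn_KH_mul_KH_and_integral hH hH1 ha hau
    simp_rw [mul_sub]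
    rw [integral_sub hIt hIu, ht, hu]
  rw [increment r (hs.trans hsr.le) hru.le, increment s hs (hsr.trans hru).le]
  ring
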